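/- arXiv:1701.05946 — 3 statements merged into one kernel-verified Lean document; each statement's English description precedes it below -/
import Mathlib

section
/- Let x : [0,∞) → ℝ be nondecreasing and p(v) = inf { z : x(z) = x(v) }. If v is a point of continuity of x, then for every report b with x(b) > x(v) we have p(b) ≥ v, so a simple value maximizer of type v cannot afford any strictly larger allocation (except possibly at price exactly v, which violates no strict-preference). Hence overbidding is not strictly beneficial at continuity points, and since a monotone function has at most countably many discontinuities, truthful reporting is optimal for all types except a set of measure zero (DSIC-AE). -/
open MeasureTheory

/-- For nondecreasing `x` on `[0,∞)` with minimum-bid pricing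
`p b = inf { z ≥ 0 : x z = x b }`: (a) at any continuity point `v ≥ 0` of `x`,
every report `b` with `x b > x v` has price `p b ≥ v`, so overbidding is not
strictly beneficial; (b) the set of discontinuity points of `x` is countable and
hence has Lebesgue measure zero (so truthfulness holds almost everywhere). -/
theorem overbid_unprofitable_at_continuity_and_ae (x : ℝ → ℝ) (hx : Monotone x) :
    (∀ v b : ℝ, 0 ≤ v → 0 ≤ b → ContinuousAt x v → x v < x b →
      v ≤ sInf {z : ℝ | 0 ≤ z ∧ x z = x b}) ∧
    {v : ℝ | 0 ≤ v ∧ ¬ ContinuousAt x v}.Countable ∧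
    volume {v : ℝ | 0 ≤ v ∧ ¬ ContinuousAt x v} = 0 := by
  have hc : {v : ℝ | 0 ≤ v ∧ ¬ ContinuousAt x v}.Countable :=
    (hx.countable_not_continuousAt).mono (fun v hv => hv.2)
  refine ⟨?_, hc, hc.measure_zero _⟩
  intro v b hv hb _ hlt
  refine le_csInf ⟨b, hb, rfl⟩ ?_
  rintro z ⟨hz, hzx⟩
  by_contra h
  push_neg at h
  exact absurd (hzx ▸ hx h.le) (not_le.mpr hlt)
end

section
/- In the separable GSP auction with distinct scores, GSP is truthful for simple value maximizers: for a bidder with value v and any fixed competing scores s₁ > s₂ > … (products of others' weights and bids), reporting b = v obtains the highest slot whose GSP price is at most v; no report b' can obtain a strictly higher slot at a price ≤ v, nor the same slot at a strictly lower price. -/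
/-! Bidding `v` wins exactly the competitors whose score exceeds `β v`; since scores decrease,
these are the top `gspSlot v` ones, so the competitor just below scores at most `β v` and the
price is at most `v`. Conversely a price `s j / β ≤ v` forces `s j ≤ β v`, so slot `j` lies
at or below the truthful slot, and CTRs decrease. -/

/-- The slot (0-indexed) obtained by bidding `b` with weight `β` against the `k`
competitor scores `s 0 > s 1 > …`: the number of competitors with score above `β·b`. -/
noncomputable def gspSlot (k : ℕ) (s : ℕ → ℝ) (β b : ℝ) : ℕ :=
  ((Finset.range k).filter (fun i => β * b < s i)).card

/-- The GSP price-per-click in that slot: the score of the competitor just below,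
divided by `β` (the minimum bid keeping the slot). -/
noncomputable def gspPrice (k : ℕ) (s : ℕ → ℝ) (β b : ℝ) : ℝ :=
  s (gspSlot k s β b) / β

theorem Finset.mem_iff_lt_card_of_downward_closed (F : Finset ℕ)
    (hF : ∀ i ∈ F, ∀ j ≤ i, j ∈ F) (i : ℕ) : i ∈ F ↔ i < F.card := by
  constructor
  · intro hi
    have hsub : Finset.range (i + 1) ⊆ F := fun j hj =>
      hF i hi j (Nat.lt_succ_iff.mp (Finset.mem_range.mp hj))
    simpa using Finset.card_le_card hsub
  · contrapose!
    intro hi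
    have hsub : F ⊆ Finset.range i := fun j hj =>
      Finset.mem_range.mpr (lt_of_not_ge fun hij => hi (hF j hj i hij))
    simpa using Finset.card_le_card hsub

theorem antitoneOn_Iio_of_succ_lt {γ : Type*} [Preorder γ] {k : ℕ} {s : ℕ → γ} (hs : ∀ i, i + 1 < k → s (i + 1) < s i) :
    AntitoneOn s (Set.Iio k) :=
  (strictAntiOn_Iic_of_succ_lt (n := k - 1) fun m _ => hs m (by omega)).antitoneOn.mono
    fun i (hi : i < k) => show i ≤ k - 1 by omega

section GSP

variable {k : ℕ} {s : ℕ → ℝ} {β b : ℝ}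

theorem lt_gspSlot_iff (hs : AntitoneOn s (Set.Iio k)) (i : ℕ) :
    i < gspSlot k s β b ↔ i < k ∧ β * b < s i := by
  rw [gspSlot, ← Finset.mem_iff_lt_card_of_downward_closed, Finset.mem_filter, Finset.mem_range]
  rintro i hi j hji
  rw [Finset.mem_filter, Finset.mem_range] at hi ⊢
  exact ⟨hji.trans_lt hi.1, hi.2.trans_le (hs (hji.trans_lt hi.1) hi.1 hji)⟩

theorem gspSlot_le_of_score_le (hs : AntitoneOn s (Set.Iio k)) {j : ℕ} (hj : s j ≤ β * b) :
    gspSlot k s β b ≤ j := by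
  by_contra! hlt
  exact hj.not_gt ((lt_gspSlot_iff hs j).mp hlt).2

theorem score_gspSlot_le (hs : AntitoneOn s (Set.Iio k)) (hbot : s k ≤ β * b) :
    s (gspSlot k s β b) ≤ β * b := by
  rcases (gspSlot_le_of_score_le hs hbot).eq_or_lt with heq | hlt
  · rwa [heq]
  · by_contra! hgt
    exact lt_irrefl _ ((lt_gspSlot_iff hs _).mpr ⟨hlt, hgt⟩)

theorem gspPrice_le_iff (hβ : 0 < β) {v : ℝ} :
    gspPrice k s β b ≤ v ↔ s (gspSlot k s β b) ≤ β * v := by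
  rw [gspPrice, div_le_iff₀ hβ, mul_comm v]

end GSP

theorem gsp_truthful_for_simple_value_maximizers_general
    (k : ℕ) (s α : ℕ → ℝ) (β v : ℝ) (hβ : 0 < β) (hv : 0 < v)
    (hs_dec : ∀ i, i + 1 < k → s (i + 1) < s i)
    (hs_bot : s k = 0)
    (hα_dec : ∀ j, α (j + 1) < α j) :
    gspPrice k s β v ≤ v ∧
    (∀ b' : ℝ, gspPrice k s β b' ≤ v → α (gspSlot k s β b') ≤ α (gspSlot k s β v)) ∧
    (∀ b' : ℝ, gspSlot k s β b' = gspSlot k s β v →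
      gspPrice k s β v ≤ gspPrice k s β b') := by
  have hs := antitoneOn_Iio_of_succ_lt hs_dec
  have hα : Antitone α := (strictAnti_nat_of_succ_lt hα_dec).antitone
  refine ⟨?_, fun b' hb' => ?_, fun b' hslot => ?_⟩
  · exact (gspPrice_le_iff hβ).mpr (score_gspSlot_le hs (by rw [hs_bot]; positivity))
  · exact hα (gspSlot_le_of_score_le hs ((gspPrice_le_iff hβ).mp hb'))
  · rw [gspPrice, gspPrice, hslot]

/-- GSP with distinct scores is truthful for simple value
maximizers: with weight `β > 0`, value `v > 0`, strictly decreasing positive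
competitor scores `s 0 > … > s (k-1) > 0` (all distinct from `β·v`, with
`s k = 0` meaning the bottom slot is free), and strictly decreasing positive
CTRs `α`, bidding `b = v` is feasible (`price v ≤ v`) and dominant: no report
`b'` obtains a higher-CTR slot at a price ≤ `v`, nor the same slot at a
strictly lower price. -/
theorem gsp_truthful_for_simple_value_maximizers
    (k : ℕ) (s α : ℕ → ℝ) (β v : ℝ) (hβ : 0 < β) (hv : 0 < v)
    (hs_pos : ∀ i < k, 0 < s i) (hs_dec : ∀ i, i + 1 < k → s (i + 1) < s i)
    (hs_bot : s k = 0) (hdistinct : ∀ i < k, s i ≠ β * v)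
    (hα_pos : ∀ j, 0 < α j) (hα_dec : ∀ j, α (j + 1) < α j) :
    gspPrice k s β v ≤ v ∧
    (∀ b' : ℝ, gspPrice k s β b' ≤ v → α (gspSlot k s β b') ≤ α (gspSlot k s β v)) ∧
    (∀ b' : ℝ, gspSlot k s β b' = gspSlot k s β v →
      gspPrice k s β v ≤ gspPrice k s β b') :=
  gsp_truthful_for_simple_value_maximizers_general k s α β v hβ hv hs_dec hs_bot hα_dec
end

section
/- Fix a bidder with value v > 0 and ROI constraint γ ≥ 0 facing a mechanism that is truthful for simple value maximizers in a single-parameter domain with minimum-bid pricing p(b) = inf{ z : x(z) = x(b) } for a nondecreasing allocation x. Then reporting v' = v/(1+γ) maximizes the bidder's allocation among all reports whose price satisfies the ROI constraint: for any report b with p(b) ≤ v/(1+γ), x(b) ≤ x(v'), provided v' is a continuity point of x. -/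
/-- With nondecreasing allocation `x` on `[0,∞)` and minimum-bid
pricing `p b = inf { z ≥ 0 : x z = x b }`, a bidder with value `v > 0` and ROI
constraint `γ ≥ 0` maximizes her allocation subject to the ROI constraint by
reporting `v' = v/(1+γ)` (at continuity points of `x`): every report `b ≥ 0`
with `p b ≤ v/(1+γ)` has `x b ≤ x (v/(1+γ))`, and `p (v/(1+γ)) ≤ v/(1+γ)`. -/
theorem roi_report_maximizes_allocation (x : ℝ → ℝ) (hx : Monotone x)
    (v γ : ℝ) (hv : 0 < v) (hγ : 0 ≤ γ)
    (hcont : ContinuousAt x (v / (1 + γ))) :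
    (∀ b : ℝ, 0 ≤ b → sInf {z : ℝ | 0 ≤ z ∧ x z = x b} ≤ v / (1 + γ) →
      x b ≤ x (v / (1 + γ))) ∧
    sInf {z : ℝ | 0 ≤ z ∧ x z = x (v / (1 + γ))} ≤ v / (1 + γ) := by
  set v' := v / (1 + γ) with hv'
  have hv'pos : 0 < v' := div_pos hv (by linarith)
  constructor
  · intro b hb hinf
    have hne : ({z : ℝ | 0 ≤ z ∧ x z = x b}).Nonempty := ⟨b, hb, rfl⟩
    have hbdd : BddBelow {z : ℝ | 0 ≤ z ∧ x z = x b} := ⟨0, fun z hz => hz.1⟩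
    refine le_of_forall_pos_le_add (fun ε hε => ?_)
    rcases Metric.continuousAt_iff.mp hcont ε hε with ⟨δ, hδ, hδ'⟩
    have hlt : sInf {z : ℝ | 0 ≤ z ∧ x z = x b} < v' + δ / 2 := by linarith
    rcases exists_lt_of_csInf_lt hne hlt with ⟨z, hzS, hz⟩
    have h1 : x b = x z := hzS.2.symm
    have h2 : x z ≤ x (v' + δ / 2) := hx (le_of_lt hz)
    have h3 : dist (v' + δ / 2) v' < δ := by
      rw [Real.dist_eq]
      rw [abs_of_nonneg (by linarith)]
      linarith
    have h4 := hδ' h3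
    rw [Real.dist_eq] at h4
    have := abs_lt.mp h4
    linarith
  · have hmem : v' ∈ {z : ℝ | 0 ≤ z ∧ x z = x v'} := ⟨le_of_lt hv'pos, rfl⟩
    exact csInf_le ⟨0, fun z hz => hz.1⟩ hmem
end
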